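/- Let V be a finite set, F ⊆ V, let w be a non-empty finite word over V that is an {F}-burden, let v, v' ∈ F, and let ρ be an infinite sequence over V such that v is never visited after v' was visited for the first time (i.e., there are no indices m < n with ρ_m = v' and ρ_n = v). Then maxscore_{{F}}(wρ) ≤ 2, i.e., score_F(wx) ≤ 2 for every finite prefix x of ρ. -/
import Mathlib


/- Common definitions for finite-time Muller games, following
   McNaughton / Fearnley-Zimmermann. -/

universe u

variable {V : Type u}

/-- The occurrence set of a finite word: the set of letters occurring in it. -/
def occ (x : List V) : Set V := {v | v ∈ x}

/-- `score F w` is the maximal `k` such that some suffix of `w` decomposes as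
`x₁ ⋯ x_k` with every `xᵢ` non-empty and `occ xᵢ = F` (with `max ∅ = 0`). -/
noncomputable def score (F : Set V) (w : List V) : ℕ :=
  sSup {k | ∃ xs : List (List V), xs.length = k ∧
    (∀ x ∈ xs, x ≠ [] ∧ occ x = F) ∧ xs.flatten <:+ w}

/-- `maxscore 𝓕 w` is the maximum of `score F u` over `F ∈ 𝓕` and non-empty
prefixes `u` of `w`. -/
noncomputable def maxscore (𝓕 : Set (Set V)) (w : List V) : ℕ :=
  sSup {n | ∃ F ∈ 𝓕, ∃ u : List V, u ≠ [] ∧ u <+: w ∧ n = score F u}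

/-- `AccGood F w x` : `x` is a suffix of `w` with `occ x ⊆ F` such that removing
any suffix `y` of `x` from `w` does not change the score of `F`. -/
def AccGood (F : Set V) (w x : List V) : Prop :=
  x <:+ w ∧ occ x ⊆ F ∧
    ∀ y : List V, y <:+ x → score F (w.take (w.length - y.length)) = score F w

/-- The accumulator `acc F w` : the occurrence set of the longest suffix `x` of `w`
with `occ x ⊆ F` such that the score of `F` did not change during `x`. -/
noncomputable def acc (F : Set V) (w : List V) : Set V :=
  occ (w.drop (sInf {i | AccGood F w (w.drop i)}))

/-- A non-empty word `w` is an `𝓕`-burden if `maxscore 𝓕 w ≤ 2` and for every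
`F ∈ 𝓕` either `score F w = 0`, or `score F w = 1` and `acc F w = ∅`. -/
def Burden (𝓕 : Set (Set V)) (w : List V) : Prop :=
  w ≠ [] ∧ maxscore 𝓕 w ≤ 2 ∧
    ∀ F ∈ 𝓕, score F w = 0 ∨ (score F w = 1 ∧ acc F w = ∅)

/-- The maxscore of an infinite sequence: the supremum (in `ℕ∞`) of the scores of
sets `F ∈ 𝓕` over all non-empty finite prefixes. -/
noncomputable def maxscoreInf (𝓕 : Set (Set V)) (ρ : ℕ → V) : ℕ∞ :=
  ⨆ F ∈ 𝓕, ⨆ n : ℕ, (score F ((List.range (n + 1)).map ρ) : ℕ∞)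

/-- The set of elements occurring infinitely often in the sequence `ρ`. -/
def limitSet (ρ : ℕ → V) : Set V := {v | ∀ N : ℕ, ∃ n, N ≤ n ∧ ρ n = v}

/-- The indicator of a play: the union of all `F ∈ 𝓕` with positive score
together with all non-empty accumulators of members of `𝓕`. -/
noncomputable def ind (𝓕 : Set (Set V)) (w : List V) : Set V :=
  (⋃ F ∈ {F ∈ 𝓕 | 0 < score F w}, F) ∪ ⋃ F ∈ {F ∈ 𝓕 | acc F w ≠ ∅}, acc F w

/-- An arena: a finite directed graph together with the set `V0` of vertices of
Player 0 (Player 1 owns the complement), where every vertex has a successor. -/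
structure Arena (V : Type u) where
  V0 : Set V
  E : V → V → Prop
  exists_succ : ∀ v, ∃ u, E v u

/-- The positions of Player `i`. -/
def Arena.pos (G : Arena V) (i : Fin 2) : Set V :=
  if i = 0 then G.V0 else G.V0ᶜ

/-- A strategy maps a history (the play so far, excluding the current vertex)
and the current vertex to a successor vertex. -/
abbrev Strategy (V : Type u) := List V → V → V

/-- A strategy is legal if it always moves along edges. -/
def Arena.Legal (G : Arena V) (σ : Strategy V) : Prop :=
  ∀ w v, G.E v (σ w v)

/-- An infinite play in `G` starting in `v`. -/
def Arena.IsPlay (G : Arena V) (v : V) (ρ : ℕ → V) : Prop :=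
  ρ 0 = v ∧ ∀ n, G.E (ρ n) (ρ (n + 1))

/-- An infinite play is consistent with the strategy `σ` of Player `i`. -/
def Arena.ConsistentInf (G : Arena V) (i : Fin 2) (σ : Strategy V) (ρ : ℕ → V) : Prop :=
  ∀ n, ρ n ∈ G.pos i → ρ (n + 1) = σ ((List.range n).map ρ) (ρ n)

/-- Player `i` (with winning condition `𝓕i`) wins the Muller game from `v`. -/
def Arena.MullerWinFrom (G : Arena V) (i : Fin 2) (𝓕i : Set (Set V)) (v : V) : Prop :=
  ∃ σ : Strategy V, G.Legal σ ∧
    ∀ ρ : ℕ → V, G.IsPlay v ρ → G.ConsistentInf i σ ρ → limitSet ρ ∈ 𝓕i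

/-- The winning region of Player `i` in the Muller game. -/
def Arena.MullerWinRegion (G : Arena V) (i : Fin 2) (𝓕i : Set (Set V)) : Set V :=
  {v | G.MullerWinFrom i 𝓕i v}

/-- A finite play is consistent with the strategy `σ` of Player `i`. -/
def Arena.ConsistentFin (G : Arena V) (i : Fin 2) (σ : Strategy V) (w : List V) : Prop :=
  ∀ (u : List V) (v x : V), u ++ [v, x] <+: w → v ∈ G.pos i → x = σ u v

/-- A play of the finite-time Muller game with threshold `k`: a finite path
whose maxscore (over all subsets) is exactly `k`, while the maxscore of
its proper prefixes is `< k`. -/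
def FTPlay (G : Arena V) (k : ℕ) (w : List V) : Prop :=
  w.Chain' G.E ∧ maxscore (Set.univ : Set (Set V)) w = k ∧
    maxscore (Set.univ : Set (Set V)) w.dropLast < k

/-- Player `i` wins the finite-time Muller game with threshold `k` from `v`. -/
def FTWinFrom (G : Arena V) (i : Fin 2) (𝓕i : Set (Set V)) (k : ℕ) (v : V) : Prop :=
  ∃ σ : Strategy V, G.Legal σ ∧
    ∀ w : List V, FTPlay G k w → w.head? = some v → G.ConsistentFin i σ w →
      ∃ F ∈ 𝓕i, score F w = k

/-- The winning region of Player `i` in the finite-time Muller game. -/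
def FTWinRegion (G : Arena V) (i : Fin 2) (𝓕i : Set (Set V)) (k : ℕ) : Set V :=
  {v | FTWinFrom G i 𝓕i k v}

/-- A play of McNaughton's finite-time Muller game: a finite path such that some
set `F` reaches score `|F|! + 1`, while no set did so in a proper prefix. -/
def McNPlay (G : Arena V) (w : List V) : Prop :=
  w.Chain' G.E ∧ (∃ F : Set V, score F w = F.ncard.factorial + 1) ∧
    ∀ u : List V, u <+: w → u ≠ w →
      ∀ F : Set V, score F u ≠ F.ncard.factorial + 1

/-- Player `i` wins McNaughton's finite-time Muller game from `v`. -/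
def McNWinFrom (G : Arena V) (i : Fin 2) (𝓕i : Set (Set V)) (v : V) : Prop :=
  ∃ σ : Strategy V, G.Legal σ ∧
    ∀ w : List V, McNPlay G w → w.head? = some v → G.ConsistentFin i σ w →
      ∃ F ∈ 𝓕i, score F w = F.ncard.factorial + 1

/-- The winning region of Player `i` in McNaughton's finite-time Muller game. -/
def McNWinRegion (G : Arena V) (i : Fin 2) (𝓕i : Set (Set V)) : Set V :=
  {v | McNWinFrom G i 𝓕i v}

open Classical in
/-- The list `ρ₀ ⋯ ρₙ` of the first `n+1` vertices of the unique play that starts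
in `v` and is consistent with the strategy `σ` of Player `i` and the strategy `τ`
of the other player. -/
noncomputable def playList (G : Arena V) (i : Fin 2) (σ τ : Strategy V) (v : V) :
    ℕ → List V
  | 0 => [v]
  | n + 1 =>
      let w := playList G i σ τ v n
      let u := w.getLastD v
      w ++ [if u ∈ G.pos i then σ w.dropLast u else τ w.dropLast u]

/-- `playOf G i σ τ v` : the unique play starting in `v` that is consistent with
the strategy `σ` of Player `i` and the strategy `τ` of the other player. -/
noncomputable def playOf (G : Arena V) (i : Fin 2) (σ τ : Strategy V) (v : V)
    (n : ℕ) : V :=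
  (playList G i σ τ v n).getLastD v

section helpers

variable {V : Type u}

lemma score_bddAbove (F : Set V) (w : List V) :
    BddAbove {k | ∃ xs : List (List V), xs.length = k ∧
      (∀ x ∈ xs, x ≠ [] ∧ occ x = F) ∧ xs.flatten <:+ w} := by
  refine ⟨w.length, ?_⟩
  rintro k ⟨xs, rfl, hb, hs⟩
  have h1 : xs.length ≤ xs.flatten.length := by
    clear hs
    induction xs with
    | nil => simp
    | cons a t ih =>
        have ha := (hb a (by simp)).1
        have : 1 ≤ a.length := by
          cases a with
          | nil => exact absurd rfl ha
          | cons _ _ => simp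
        have ih' := ih (fun x hx => hb x (by simp [hx]))
        simp only [List.flatten_cons, List.length_append, List.length_cons]
        omega
  exact h1.trans hs.length_le

lemma le_score {F : Set V} {w : List V} (xs : List (List V))
    (hb : ∀ x ∈ xs, x ≠ [] ∧ occ x = F) (hs : xs.flatten <:+ w) :
    xs.length ≤ score F w :=
  le_csSup (score_bddAbove F w) ⟨xs, rfl, hb, hs⟩

lemma score_le {F : Set V} {w : List V} {n : ℕ}
    (h : ∀ xs : List (List V), (∀ x ∈ xs, x ≠ [] ∧ occ x = F) →
      xs.flatten <:+ w → xs.length ≤ n) : score F w ≤ n := by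
  refine csSup_le ⟨0, [], rfl, by simp, List.nil_suffix⟩ ?_
  rintro k ⟨xs, rfl, hb, hs⟩
  exact h xs hb hs

lemma split_boundary {u s w x : List V} (h : u ++ s = w ++ x)
    (hle : u.length ≤ w.length) : ∃ r, w = u ++ r ∧ s = r ++ x := by
  rcases List.append_eq_append_iff.mp h with ⟨r, hr1, hr2⟩ | ⟨r, hr1, hr2⟩
  · exact ⟨r, hr1, hr2⟩
  · have : r = [] := by
      have := congrArg List.length hr1
      simp at this
      exact List.length_eq_zero_iff.mp (by omega)
    subst this
    refine ⟨[], ?_, ?_⟩ <;> simp_all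

lemma getElem_mid (u t : List V) (z : V) :
    (u ++ z :: t)[u.length]'(by simp) = z := by
  rw [List.getElem_append_right (le_refl _)]
  simp

end helpers

/-- Let `w` be an `{F}`-burden, let `v, v' ∈ F`, and let `ρ` be
an infinite sequence such that `v` is never visited after `v'` was visited for
the first time. Then `maxscore_{{F}}(wρ) ≤ 2`, i.e., `score F (w x) ≤ 2` for
every finite prefix `x` of `ρ`. -/
theorem stmt_8 {V : Type u} [Fintype V] (F : Set V) (w : List V)
    (hw : Burden {F} w) (v v' : V) (hv : v ∈ F) (hv' : v' ∈ F) (ρ : ℕ → V)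
    (hρ : ¬∃ m n : ℕ, m < n ∧ ρ m = v' ∧ ρ n = v) :
    ∀ n : ℕ, score F (w ++ (List.range n).map ρ) ≤ 2 := by
  obtain ⟨hwne, hms, hburden⟩ := hw
  have hbF : score F w = 0 ∨ (score F w = 1 ∧ acc F w = ∅) := hburden F rfl
  have hle1 : score F w ≤ 1 := by rcases hbF with h | ⟨h, _⟩ <;> omega
  intro n
  set x : List V := (List.range n).map ρ with hxdef
  apply score_le
  intro xs hb hs
  by_contra hk
  push_neg at hk
  match xs, hk with
  | x₁ :: x₂ :: x₃ :: rest, hk =>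
  have hx1 := hb x₁ (by simp)
  have hx2 := hb x₂ (by simp)
  have hx3 := hb x₃ (by simp)
  have hrest : occ rest.flatten ⊆ F := by
    intro z hz
    obtain ⟨l, hl, hzl⟩ := List.mem_flatten.mp hz
    rw [← (hb l (by simp [hl])).2]; exact hzl
  obtain ⟨a, ha⟩ := hs
  simp only [List.flatten_cons] at ha
  -- locate v' in x₂ and v in x₃
  have hv'x2 : v' ∈ x₂ := by rw [← hx2.2] at hv'; exact hv'
  have hvx3 : v ∈ x₃ := by rw [← hx3.2] at hv; exact hv
  obtain ⟨c, d, hcd⟩ := List.append_of_mem hv'x2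
  obtain ⟨e, f, hef⟩ := List.append_of_mem hvx3
  -- positions
  set p : ℕ := a.length + x₁.length + c.length with hpdef
  set q : ℕ := a.length + x₁.length + x₂.length + e.length with hqdef
  by_cases hq : q < w.length
  · -- x₁ and x₂ entirely inside w : score F w ≥ 2, contradiction
    have hsplit : (a ++ x₁ ++ x₂) ++ (x₃ ++ rest.flatten) = w ++ x := by
      simpa [List.append_assoc] using ha
    have hlen : (a ++ x₁ ++ x₂).length ≤ w.length := by
      have he' : e.length ≤ x₃.length := by
        subst hef; simp
      simp only [List.length_append]
      omega
    obtain ⟨r, hr1, hr2⟩ := split_boundary hsplit hlen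
    have hrF : occ r ⊆ F := by
      intro z hz
      have : z ∈ x₃ ++ rest.flatten := by
        rw [hr2]; exact List.mem_append_left _ hz
      rcases List.mem_append.mp this with h | h
      · rw [← hx3.2]; exact h
      · exact hrest h
    have hrne : r ≠ [] := by
      intro h; subst h
      have := congrArg List.length hr1
      simp only [List.length_append, List.append_nil] at this
      omega
    have h2 : 2 ≤ score F w := by
      have := le_score (F := F) (w := w) [x₁, x₂ ++ r] ?_ ?_
      · simpa using this
      · rintro y hy
        simp only [List.mem_cons, List.mem_singleton] at hy
        rcases hy with rfl | rfl | h
        · exact hx1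
        · constructor
          · simp [hx2.1]
          · apply Set.Subset.antisymm
            · intro z hz
              rcases List.mem_append.mp hz with h | h
              · rw [← hx2.2]; exact h
              · exact hrF h
            · intro z hz
              rw [← hx2.2] at hz
              exact List.mem_append_left _ hz
        · simp at h
      · refine ⟨a, ?_⟩
        rw [hr1]; simp [List.append_assoc]
    omega
  · by_cases hp : p < w.length
    · -- v' inside w, v outside: accumulator argument
      have hsplit : (a ++ x₁) ++ (x₂ ++ (x₃ ++ rest.flatten)) = w ++ x := by
        simpa [List.append_assoc] using ha
      have hlen : (a ++ x₁).length ≤ w.length := by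
        simp only [List.length_append]; omega
      obtain ⟨r, hr1, hr2⟩ := split_boundary hsplit hlen
      have hrF : occ r ⊆ F := by
        intro z hz
        have : z ∈ x₂ ++ (x₃ ++ rest.flatten) := by
          rw [hr2]; exact List.mem_append_left _ hz
        rcases List.mem_append.mp this with h | h
        · rw [← hx2.2]; exact h
        · rcases List.mem_append.mp h with h | h
          · rw [← hx3.2]; exact h
          · exact hrest h
      have hrne : r ≠ [] := by
        intro h; subst h
        have := congrArg List.length hr1
        simp only [List.length_append, List.append_nil] at this
        omega
      -- score F w ≥ 1
      have h1 : 1 ≤ score F w := by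
        have := le_score (F := F) (w := w) [x₁ ++ r] ?_ ?_
        · simpa using this
        · rintro y hy
          simp only [List.mem_singleton] at hy
          subst hy
          constructor
          · simp [hx1.1]
          · apply Set.Subset.antisymm
            · intro z hz
              rcases List.mem_append.mp hz with h | h
              · rw [← hx1.2]; exact h
              · exact hrF h
            · intro z hz
              rw [← hx1.2] at hz
              exact List.mem_append_left _ hz
        · exact ⟨a, by rw [hr1]; simp [List.append_assoc]⟩
      rcases hbF with h0 | ⟨hsc1, hacc⟩
      · omega
      -- AccGood F w r
      have hAG : AccGood F w r := by
        refine ⟨⟨a ++ x₁, by rw [hr1]⟩, hrF, ?_⟩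
        intro y hy
        obtain ⟨r', hr'⟩ := hy
        have hwdec : w = (a ++ x₁ ++ r') ++ y := by
          rw [hr1, ← hr']; simp [List.append_assoc]
        have htake : w.take (w.length - y.length) = a ++ x₁ ++ r' := by
          rw [hwdec]
          have : ((a ++ x₁ ++ r') ++ y).length - y.length = (a ++ x₁ ++ r').length := by
            simp only [List.length_append]
            omega
          rw [this, List.take_left]
        rw [htake, hsc1]
        have hr'F : occ r' ⊆ F := by
          intro z hz
          apply hrF
          rw [← hr']
          exact List.mem_append_left _ hz
        have hge : 1 ≤ score F (a ++ x₁ ++ r') := by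
          have := le_score (F := F) (w := a ++ x₁ ++ r') [x₁ ++ r'] ?_ ?_
          · simpa using this
          · rintro z hz
            simp only [List.mem_singleton] at hz
            subst hz
            constructor
            · simp [hx1.1]
            · apply Set.Subset.antisymm
              · intro z hz
                rcases List.mem_append.mp hz with h | h
                · rw [← hx1.2]; exact h
                · exact hr'F h
              · intro z hz
                rw [← hx1.2] at hz
                exact List.mem_append_left _ hz
          · exact ⟨a, by simp [List.append_assoc]⟩
        have hle : score F (a ++ x₁ ++ r') ≤ 1 := by
          apply score_le
          intro ys hbys hsys
          by_contra hys
          push_neg at hys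
          match ys, hys with
          | y₁ :: y₂ :: rest2, hys =>
          obtain ⟨t, ht⟩ := hsys
          simp only [List.flatten_cons] at ht
          have h2w : 2 ≤ score F w := by
            have := le_score (F := F) (w := w) [y₁, y₂ ++ rest2.flatten ++ y] ?_ ?_
            · simpa using this
            · rintro z hz
              simp only [List.mem_cons, List.mem_singleton] at hz
              have hy1 := hbys y₁ (by simp)
              have hy2 := hbys y₂ (by simp)
              have hrest2 : occ rest2.flatten ⊆ F := by
                intro z hz
                obtain ⟨l, hl, hzl⟩ := List.mem_flatten.mp hz
                rw [← (hbys l (by simp [hl])).2]; exact hzl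
              have hyinF : occ y ⊆ F := by
                intro z hz
                apply hrF
                rw [← hr']
                exact List.mem_append_right _ hz
              rcases hz with rfl | rfl | h
              · exact hy1
              · constructor
                · simp [hy2.1]
                · apply Set.Subset.antisymm
                  · intro z hz
                    rcases List.mem_append.mp hz with h | h
                    · rcases List.mem_append.mp h with h | h
                      · rw [← hy2.2]; exact h
                      · exact hrest2 h
                    · exact hyinF h
                  · intro z hz
                    rw [← hy2.2] at hz
                    exact List.mem_append_left _ (List.mem_append_left _ hz)
              · simp at h
            · refine ⟨t, ?_⟩
              rw [hwdec, ← ht]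
              simp [List.append_assoc]
          omega
        omega
      -- acc F w ≠ ∅, contradiction
      have hm : (a ++ x₁).length ∈ {i | AccGood F w (w.drop i)} := by
        have hdr : w.drop (a ++ x₁).length = r := by rw [hr1, List.drop_left]
        show AccGood F w (w.drop (a ++ x₁).length)
        rw [hdr]; exact hAG
      have hinf : sInf {i | AccGood F w (w.drop i)} ≤ (a ++ x₁).length :=
        Nat.sInf_le hm
      have hlt : sInf {i | AccGood F w (w.drop i)} < w.length := by
        simp only [List.length_append] at hinf ⊢
        omega
      have hne : w.drop (sInf {i | AccGood F w (w.drop i)}) ≠ [] := by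
        intro h
        rw [List.drop_eq_nil_iff] at h
        omega
      obtain ⟨z, hz⟩ := List.exists_mem_of_ne_nil _ hne
      have : z ∈ acc F w := hz
      rw [hacc] at this
      exact this
    · -- both v' and v in the ρ part: contradiction with hρ
      push_neg at hq hp
      apply hρ
      refine ⟨p - w.length, q - w.length, ?_, ?_, ?_⟩
      · have : c.length < x₂.length := by subst hcd; simp
        omega
      · -- (w ++ x)[p] = v'
        have hWdec : w ++ x = (a ++ x₁ ++ c) ++ v' :: (d ++ (x₃ ++ rest.flatten)) := by
          rw [← ha, hcd]; simp [List.append_assoc]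
        have hplen : p = (a ++ x₁ ++ c).length := by simp only [hpdef, List.length_append]
        have hpbound : p < (w ++ x).length := by
          rw [hWdec]; simp only [List.length_append, List.length_cons]; omega
        have h1 : (w ++ x)[p]'hpbound = v' := by
          have := getElem_mid (a ++ x₁ ++ c) (d ++ (x₃ ++ rest.flatten)) v'
          rw [← this]
          congr 1
        have h2 : (w ++ x)[p]'hpbound = ρ (p - w.length) := by
          rw [List.getElem_append_right hp]
          have hb2 : p - w.length < n := by
            have := hpbound
            simp only [List.length_append, hxdef, List.length_map,
              List.length_range] at this ⊢
            omega
          simp [hxdef]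
        rw [← h2, h1]
      · -- (w ++ x)[q] = v
        have hWdec : w ++ x = (a ++ x₁ ++ x₂ ++ e) ++ v :: (f ++ rest.flatten) := by
          rw [← ha, hef]; simp [List.append_assoc]
        have hqlen : q = (a ++ x₁ ++ x₂ ++ e).length := by simp only [hqdef, List.length_append]
        have hqbound : q < (w ++ x).length := by
          rw [hWdec]; simp only [List.length_append, List.length_cons]; omega
        have h1 : (w ++ x)[q]'hqbound = v := by
          have := getElem_mid (a ++ x₁ ++ x₂ ++ e) (f ++ rest.flatten) v
          rw [← this]
          congr 1
        have h2 : (w ++ x)[q]'hqbound = ρ (q - w.length) := by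
          rw [List.getElem_append_right (by omega)]
          have hb2 : q - w.length < n := by
            have := hqbound
            simp only [List.length_append, hxdef, List.length_map,
              List.length_range] at this ⊢
            omega
          simp [hxdef]
        rw [← h2, h1]
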